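/- arXiv:1506.04954 — 2 statements merged into one kernel-verified Lean document; each statement's English description precedes it below -/
import Mathlib

section
/- For every s×t×n real tensor 𝒱 and every ρ > 0, the s×s×n tensor 𝒱*𝒱ᵀ + ρℐ is invertible with respect to the t-product: there exists an s×s×n real tensor ℬ such that (𝒱*𝒱ᵀ + ρℐ)*ℬ = ℐ and ℬ*(𝒱*𝒱ᵀ + ρℐ) = ℐ, where ℐ is the identity tensor (ℐ(i,j,k) = 1 iff i = j and k = 0) and 𝒱ᵀ(j,i,k) = 𝒱(i,j,−k). -/
open Matrix

/-- The t-product of an `l × p × n` tensor and a `p × m × n` tensor: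
circular convolution along the third index. -/
def tProd3 {l p m n : ℕ} [NeZero n] (A : Fin l → Fin p → ZMod n → ℝ)
    (B : Fin p → Fin m → ZMod n → ℝ) : Fin l → Fin m → ZMod n → ℝ :=
  fun i j k => ∑ a : Fin p, ∑ mm : ZMod n, A i a mm * B a j (k - mm)

/-- The tensor transpose: `𝒜ᵀ(j,i,k) = 𝒜(i,j,−k)`. -/
def tTranspose {l m n : ℕ} (A : Fin l → Fin m → ZMod n → ℝ) :
    Fin m → Fin l → ZMod n → ℝ :=
  fun j i k => A i j (-k)

/-- The `m × m × n` identity tensor. -/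
def tId (m n : ℕ) : Fin m → Fin m → ZMod n → ℝ :=
  fun i j k => if i = j ∧ k = 0 then 1 else 0

/-- Block-circulant matrix associated to a tensor. -/
def Phi3 {l m n : ℕ} [NeZero n] (A : Fin l → Fin m → ZMod n → ℝ) :
    Matrix (Fin l × ZMod n) (Fin m × ZMod n) ℝ :=
  fun p q => A p.1 q.1 (p.2 - q.2)

lemma Phi3_mul {l p m n : ℕ} [NeZero n] (A : Fin l → Fin p → ZMod n → ℝ)
    (B : Fin p → Fin m → ZMod n → ℝ) :
    Phi3 (tProd3 A B) = Phi3 A * Phi3 B := by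
  ext ⟨i, k⟩ ⟨j, k'⟩
  simp only [Phi3, tProd3, Matrix.mul_apply, Fintype.sum_prod_type]
  refine Finset.sum_congr rfl fun a _ => ?_
  refine Fintype.sum_equiv (Equiv.subLeft k) _ _ fun mm => ?_
  simp only [Equiv.subLeft_apply, sub_sub_cancel]
  rw [sub_right_comm]

lemma Phi3_id {m n : ℕ} [NeZero n] : Phi3 (tId m n) = (1 : Matrix (Fin m × ZMod n) _ ℝ) := by
  ext ⟨i, k⟩ ⟨j, k'⟩
  simp only [Phi3, tId, Matrix.one_apply, Prod.mk.injEq, sub_eq_zero]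

lemma Phi3_transpose {l m n : ℕ} [NeZero n] (A : Fin l → Fin m → ZMod n → ℝ) :
    Phi3 (tTranspose A) = (Phi3 A)ᵀ := by
  ext ⟨i, k⟩ ⟨j, k'⟩
  simp [Phi3, tTranspose, Matrix.transpose_apply, neg_sub]

/-- the shift tensor -/
def tShift (m n : ℕ) (c : ZMod n) : Fin m → Fin m → ZMod n → ℝ :=
  fun i j k => if i = j ∧ k = c then 1 else 0

lemma tShift_mul {m n : ℕ} [NeZero n] (c : ZMod n) (A : Fin m → Fin m → ZMod n → ℝ) :
    tProd3 (tShift m n c) A = tProd3 A (tShift m n c) := by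
  funext i j k
  show (∑ a : Fin m, ∑ mm : ZMod n, (if i = a ∧ mm = c then (1:ℝ) else 0) * A a j (k - mm))
      = ∑ a : Fin m, ∑ mm : ZMod n, A i a mm * (if a = j ∧ k - mm = c then (1:ℝ) else 0)
  have h1 : ∀ a : Fin m, ∑ mm : ZMod n, (if i = a ∧ mm = c then (1:ℝ) else 0) * A a j (k - mm)
      = if i = a then A a j (k - c) else 0 := by
    intro a
    rw [Finset.sum_eq_single c]
    · by_cases h : i = a <;> simp [h]
    · intro b _ hb; simp [hb]
    · simp
  have h2 : ∀ mm : ZMod n, ∑ a : Fin m, A i a mm * (if a = j ∧ k - mm = c then (1:ℝ) else 0)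
      = if k - mm = c then A i j mm else 0 := by
    intro mm
    rw [Finset.sum_eq_single j]
    · by_cases h : k - mm = c <;> simp [h]
    · intro b _ hb; simp [hb]
    · simp
  calc (∑ a : Fin m, ∑ mm : ZMod n, (if i = a ∧ mm = c then (1:ℝ) else 0) * A a j (k - mm))
      = ∑ a : Fin m, if i = a then A a j (k - c) else 0 :=
        Finset.sum_congr rfl fun a _ => h1 a
    _ = A i j (k - c) := by rw [Finset.sum_eq_single i] <;> simp +contextual [eq_comm]
    _ = ∑ mm : ZMod n, if k - mm = c then A i j mm else 0 := by
        rw [Finset.sum_eq_single (k - c)]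
        · simp
        · intro b _ hb
          rw [if_neg]; intro h; exact hb (by rw [← h]; ring)
        · simp
    _ = ∑ mm : ZMod n, ∑ a : Fin m, A i a mm * (if a = j ∧ k - mm = c then (1:ℝ) else 0) :=
        (Finset.sum_congr rfl fun mm _ => (h2 mm)).symm
    _ = _ := Finset.sum_comm

/-- For every `s × t × n` tensor `𝒱` and every `ρ > 0`, the tensor
`𝒱 * 𝒱ᵀ + ρ ℐ` is invertible with respect to the t-product. -/
theorem tprod_add_rho_id_invertible {s t n : ℕ} [NeZero n]
    (𝒱 : Fin s → Fin t → ZMod n → ℝ) (ρ : ℝ) (hρ : 0 < ρ) :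
    ∃ ℬ : Fin s → Fin s → ZMod n → ℝ,
      tProd3 (tProd3 𝒱 (tTranspose 𝒱) + ρ • tId s n) ℬ = tId s n ∧
      tProd3 ℬ (tProd3 𝒱 (tTranspose 𝒱) + ρ • tId s n) = tId s n := by
  set M : Fin s → Fin s → ZMod n → ℝ := tProd3 𝒱 (tTranspose 𝒱) + ρ • tId s n with hM
  set N : Matrix (Fin s × ZMod n) (Fin s × ZMod n) ℝ := Phi3 M with hN
  have hNval : N = Phi3 𝒱 * (Phi3 𝒱)ᵀ + ρ • 1 := by
    have h : Phi3 M = Phi3 (tProd3 𝒱 (tTranspose 𝒱)) + ρ • Phi3 (tId s n) := by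
      ext ⟨i, k⟩ ⟨j, k'⟩
      simp [Phi3, hM]
    rw [hN, h, Phi3_mul, Phi3_transpose, Phi3_id]
  -- N is positive definite
  have hPD : N.PosDef := by
    rw [hNval]
    refine Matrix.PosDef.posSemidef_add ?_ ?_
    · have h := Matrix.posSemidef_self_mul_conjTranspose (Phi3 𝒱)
      have he : (Phi3 𝒱)ᴴ = (Phi3 𝒱)ᵀ := by
        ext p q; simp [Matrix.conjTranspose_apply]
      rwa [he] at h
    · have hd : ρ • (1 : Matrix (Fin s × ZMod n) (Fin s × ZMod n) ℝ)
          = Matrix.diagonal (fun _ => ρ) := by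
        ext p q
        by_cases h : p = q <;> simp [h, Matrix.one_apply]
      rw [hd]
      exact Matrix.posDef_diagonal_iff.mpr fun _ => hρ
  have hUnit : IsUnit N.det := (Matrix.isUnit_iff_isUnit_det N).mp hPD.isUnit
  set W := N⁻¹ with hW
  have hNW : N * W = 1 := Matrix.mul_nonsing_inv N hUnit
  have hWN : W * N = 1 := Matrix.nonsing_inv_mul N hUnit
  -- W commutes with shifts
  have hshift : ∀ c : ZMod n, Phi3 (tShift s n c) * W = W * Phi3 (tShift s n c) := by
    intro c
    have hcomm : Phi3 (tShift s n c) * N = N * Phi3 (tShift s n c) := by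
      rw [hN, ← Phi3_mul, ← Phi3_mul, tShift_mul]
    calc Phi3 (tShift s n c) * W = W * N * Phi3 (tShift s n c) * W := by
            rw [hWN, Matrix.one_mul]
      _ = W * (Phi3 (tShift s n c) * N) * W := by
            simp only [mul_assoc, hcomm]
      _ = W * Phi3 (tShift s n c) * (N * W) := by
            simp only [mul_assoc]
      _ = W * Phi3 (tShift s n c) := by rw [hNW, Matrix.mul_one]
  -- circulant structure of W
  have hWcirc : ∀ (i j : Fin s) (k k' : ZMod n), W (i, k) (j, k') = W (i, k - k') (j, 0) := by
    intro i j k k'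
    have h1 : (W * Phi3 (tShift s n k')) (i, k) (j, 0) = W (i, k) (j, k') := by
      rw [Matrix.mul_apply, Fintype.sum_prod_type]
      rw [Finset.sum_eq_single j]
      · rw [Finset.sum_eq_single k']
        · simp [Phi3, tShift]
        · intro b _ hb; simp [Phi3, tShift, sub_eq_zero, hb]
        · simp
      · intro b _ hb
        apply Finset.sum_eq_zero
        intro x _; simp [Phi3, tShift, hb]
      · simp
    have h2 : (Phi3 (tShift s n k') * W) (i, k) (j, 0) = W (i, k - k') (j, 0) := by
      rw [Matrix.mul_apply, Fintype.sum_prod_type]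
      rw [Finset.sum_eq_single i]
      · rw [Finset.sum_eq_single (k - k')]
        · simp [Phi3, tShift, sub_sub_cancel]
        · intro b _ hb
          rw [show Phi3 (tShift s n k') (i, k) (i, b) = 0 by
            simp only [Phi3, tShift]
            rw [if_neg]; rintro ⟨-, h⟩; exact hb (by rw [← h]; ring), zero_mul]
        · simp
      · intro b _ hb
        apply Finset.sum_eq_zero
        intro x _; simp [Phi3, tShift, Ne.symm hb]
      · simp
    rw [← h1, ← hshift k', h2]
  have hPhiB : Phi3 (fun i j k => W (i, k) (j, 0)) = W := by
    ext ⟨i, k⟩ ⟨j, k'⟩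
    exact (hWcirc i j k k').symm
  refine ⟨fun i j k => W (i, k) (j, 0), ?_, ?_⟩
  · funext i j k
    have h : tProd3 M (fun i j k => W (i, k) (j, 0)) i j k
        = Phi3 (tProd3 M (fun i j k => W (i, k) (j, 0))) (i, k) (j, 0) := by
      simp [Phi3]
    rw [h, Phi3_mul, hPhiB, ← hN, hNW, ← Phi3_id]
    simp [Phi3]
  · funext i j k
    have h : tProd3 (fun i j k => W (i, k) (j, 0)) M i j k
        = Phi3 (tProd3 (fun i j k => W (i, k) (j, 0)) M) (i, k) (j, 0) := by
      simp [Phi3]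
    rw [h, Phi3_mul, hPhiB, ← hN, hWN, ← Phi3_id]
    simp [Phi3]
end

section
/- Closed form of the ADMM 𝒱-update: let 𝒴 be a p×t×n real tensor, 𝒰 a p×s×n real tensor, ℋ and Λ̄ s×t×n real tensors, and ρ > 0. Suppose ℬ is an s×s×n tensor that is a two-sided t-product inverse of 𝒰ᵀ*𝒰 + ρℐ. Then 𝒱* = ℬ*(𝒰ᵀ*𝒴 + Λ̄ + ρℋ) is the unique global minimizer over all s×t×n tensors 𝒱 of the function g(𝒱) = ½‖𝒴 − 𝒰*𝒱‖_F² + ⟨Λ̄, ℋ − 𝒱⟩ + (ρ/2)‖ℋ − 𝒱‖_F², where ⟨·,·⟩ is the Frobenius inner product and ‖·‖_F the Frobenius norm. -/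
/-- The Frobenius inner product of two tensors of the same size. -/
def frobInner {l m n : ℕ} [NeZero n] (A B : Fin l → Fin m → ZMod n → ℝ) : ℝ :=
  ∑ i : Fin l, ∑ j : Fin m, ∑ k : ZMod n, A i j k * B i j k

/-- The Frobenius norm of a third-order tensor. -/
noncomputable def frobNorm {l m n : ℕ} [NeZero n] (A : Fin l → Fin m → ZMod n → ℝ) : ℝ :=
  Real.sqrt (frobInner A A)

lemma tProd3_assoc {l p q m n : ℕ} [NeZero n] (A : Fin l → Fin p → ZMod n → ℝ)
    (B : Fin p → Fin q → ZMod n → ℝ) (C : Fin q → Fin m → ZMod n → ℝ) :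
    tProd3 (tProd3 A B) C = tProd3 A (tProd3 B C) := by
  funext i j k
  unfold tProd3
  simp only [Finset.sum_mul, Finset.mul_sum, ← Fintype.sum_prod_type']
  apply Fintype.sum_equiv ⟨fun x => (x.2.2.1, x.2.2.2, x.1, x.2.1 - x.2.2.2),
    fun y => (y.2.2.1, y.2.2.2 + y.2.1, y.1, y.2.1),
    by rintro ⟨b, u, a, mm⟩; simp, by rintro ⟨a, mm, b, v⟩; simp⟩
  rintro ⟨b, u, a, mm⟩
  simp only [Equiv.coe_fn_mk]
  rw [sub_sub, add_sub_cancel]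
  ring

lemma tProd3_id_left {l m n : ℕ} [NeZero n] (A : Fin l → Fin m → ZMod n → ℝ) :
    tProd3 (tId l n) A = A := by
  funext i j k
  simp [tProd3, tId, ite_and, Finset.sum_ite_eq, Finset.sum_ite_eq']

lemma tProd3_id_right {l m n : ℕ} [NeZero n] (A : Fin l → Fin m → ZMod n → ℝ) :
    tProd3 A (tId m n) = A := by
  funext i j k
  simp only [tProd3, tId, mul_ite, mul_one, mul_zero, ite_and]
  rw [Finset.sum_eq_single j]
  · simp [sub_eq_zero, Finset.sum_ite_eq', eq_comm]
  · intro b _ hb; simp [hb]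
  · simp

lemma tProd3_add_right {l p m n : ℕ} [NeZero n] (A : Fin l → Fin p → ZMod n → ℝ)
    (B C : Fin p → Fin m → ZMod n → ℝ) :
    tProd3 A (B + C) = tProd3 A B + tProd3 A C := by
  funext i j k
  simp [tProd3, mul_add, Finset.sum_add_distrib]

lemma tProd3_add_left {l p m n : ℕ} [NeZero n] (A B : Fin l → Fin p → ZMod n → ℝ)
    (C : Fin p → Fin m → ZMod n → ℝ) :
    tProd3 (A + B) C = tProd3 A C + tProd3 B C := by
  funext i j k
  simp [tProd3, add_mul, Finset.sum_add_distrib]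

lemma tProd3_smul_left {l p m n : ℕ} [NeZero n] (r : ℝ) (A : Fin l → Fin p → ZMod n → ℝ)
    (C : Fin p → Fin m → ZMod n → ℝ) :
    tProd3 (r • A) C = r • tProd3 A C := by
  funext i j k
  simp [tProd3, Finset.mul_sum, mul_assoc]

lemma tProd3_smul_right {l p m n : ℕ} [NeZero n] (r : ℝ) (A : Fin l → Fin p → ZMod n → ℝ)
    (C : Fin p → Fin m → ZMod n → ℝ) :
    tProd3 A (r • C) = r • tProd3 A C := by
  funext i j k
  simp only [tProd3, Pi.smul_apply, smul_eq_mul, Finset.mul_sum]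
  congr 1; ext a; congr 1; ext mm; ring

lemma tProd3_sub_right {l p m n : ℕ} [NeZero n] (A : Fin l → Fin p → ZMod n → ℝ)
    (B C : Fin p → Fin m → ZMod n → ℝ) :
    tProd3 A (B - C) = tProd3 A B - tProd3 A C := by
  funext i j k
  simp [tProd3, mul_sub, Finset.sum_sub_distrib]

lemma frobInner_comm {l m n : ℕ} [NeZero n] (A B : Fin l → Fin m → ZMod n → ℝ) :
    frobInner A B = frobInner B A := by
  unfold frobInner
  congr 1; ext i; congr 1; ext j; congr 1; ext k; ring

lemma frobInner_add_right {l m n : ℕ} [NeZero n] (A B C : Fin l → Fin m → ZMod n → ℝ) :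
    frobInner A (B + C) = frobInner A B + frobInner A C := by
  simp [frobInner, mul_add, Finset.sum_add_distrib]

lemma frobInner_sub_right {l m n : ℕ} [NeZero n] (A B C : Fin l → Fin m → ZMod n → ℝ) :
    frobInner A (B - C) = frobInner A B - frobInner A C := by
  simp [frobInner, mul_sub, Finset.sum_sub_distrib]

lemma frobInner_sub_left {l m n : ℕ} [NeZero n] (A B C : Fin l → Fin m → ZMod n → ℝ) :
    frobInner (A - B) C = frobInner A C - frobInner B C := by
  simp [frobInner, sub_mul, Finset.sum_sub_distrib]

lemma frobInner_smul_left {l m n : ℕ} [NeZero n] (r : ℝ) (A B : Fin l → Fin m → ZMod n → ℝ) :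
    frobInner (r • A) B = r * frobInner A B := by
  simp [frobInner, Finset.mul_sum, mul_assoc]

lemma frobInner_self_nonneg {l m n : ℕ} [NeZero n] (A : Fin l → Fin m → ZMod n → ℝ) :
    0 ≤ frobInner A A := by
  apply Finset.sum_nonneg; intro i _
  apply Finset.sum_nonneg; intro j _
  apply Finset.sum_nonneg; intro k _
  exact mul_self_nonneg _

lemma frobNorm_sq {l m n : ℕ} [NeZero n] (A : Fin l → Fin m → ZMod n → ℝ) :
    frobNorm A ^ 2 = frobInner A A :=
  Real.sq_sqrt (frobInner_self_nonneg A)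

lemma frobInner_self_eq_zero {l m n : ℕ} [NeZero n] (A : Fin l → Fin m → ZMod n → ℝ)
    (h : frobInner A A = 0) : A = 0 := by
  funext i j k
  have h1 : ∀ i ∈ Finset.univ, ∀ j ∈ Finset.univ, ∀ k ∈ Finset.univ,
      A i j k * A i j k = 0 := by
    have := (Finset.sum_eq_zero_iff_of_nonneg (fun i _ => Finset.sum_nonneg fun j _ =>
      Finset.sum_nonneg fun k _ => mul_self_nonneg (A i j k))).mp h
    intro i hi j hj k hk
    have := (Finset.sum_eq_zero_iff_of_nonneg (fun j _ => Finset.sum_nonneg fun k _ =>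
      mul_self_nonneg (A i j k))).mp (this i hi) j hj
    exact (Finset.sum_eq_zero_iff_of_nonneg (fun k _ => mul_self_nonneg (A i j k))).mp this k hk
  have := h1 i (Finset.mem_univ i) j (Finset.mem_univ j) k (Finset.mem_univ k)
  simpa [mul_self_eq_zero] using this

lemma frobInner_tProd3_adjoint {l p m n : ℕ} [NeZero n] (U : Fin l → Fin p → ZMod n → ℝ)
    (V : Fin p → Fin m → ZMod n → ℝ) (W : Fin l → Fin m → ZMod n → ℝ) :
    frobInner (tProd3 U V) W = frobInner V (tProd3 (tTranspose U) W) := by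
  unfold frobInner tProd3 tTranspose
  simp only [Finset.sum_mul, Finset.mul_sum, ← Fintype.sum_prod_type']
  apply Fintype.sum_equiv ⟨fun x => (x.2.2.2.1, x.2.1, x.2.2.1 - x.2.2.2.2, x.1, -x.2.2.2.2),
    fun y => (y.2.2.2.1, y.2.1, y.2.2.1 - y.2.2.2.2, y.1, -y.2.2.2.2),
    by rintro ⟨i, j, k, a, mm⟩; simp, by rintro ⟨a, j, k, i, mm⟩; simp⟩
  rintro ⟨i, j, k, a, mm⟩
  simp only [Equiv.coe_fn_mk, neg_neg, sub_neg_eq_add, sub_add_cancel]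
  ring

lemma frobInner_smul_right {l m n : ℕ} [NeZero n] (r : ℝ) (A B : Fin l → Fin m → ZMod n → ℝ) :
    frobInner A (r • B) = r * frobInner A B := by
  simp only [frobInner, Pi.smul_apply, smul_eq_mul, Finset.mul_sum]
  congr 1; ext i; congr 1; ext j; congr 1; ext k; ring

/-- Closed form of the ADMM `𝒱`-update: if `ℬ` is a two-sided t-product inverse
of `𝒰ᵀ * 𝒰 + ρ ℐ`, then `𝒱⋆ = ℬ * (𝒰ᵀ * 𝒴 + Λ̄ + ρ ℋ)` is the unique global
minimizer of `g(𝒱) = ½‖𝒴 − 𝒰*𝒱‖_F² + ⟨Λ̄, ℋ − 𝒱⟩ + (ρ/2)‖ℋ − 𝒱‖_F²`. -/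
theorem admm_V_update_closed_form {p s t n : ℕ} [NeZero n]
    (𝒴 : Fin p → Fin t → ZMod n → ℝ) (𝒰 : Fin p → Fin s → ZMod n → ℝ)
    (ℋ Λb : Fin s → Fin t → ZMod n → ℝ) (ρ : ℝ) (hρ : 0 < ρ)
    (ℬ : Fin s → Fin s → ZMod n → ℝ)
    (hℬ₁ : tProd3 (tProd3 (tTranspose 𝒰) 𝒰 + ρ • tId s n) ℬ = tId s n)
    (hℬ₂ : tProd3 ℬ (tProd3 (tTranspose 𝒰) 𝒰 + ρ • tId s n) = tId s n) :
    let g : (Fin s → Fin t → ZMod n → ℝ) → ℝ := fun 𝒱 =>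
      (1 / 2) * (frobNorm (𝒴 - tProd3 𝒰 𝒱)) ^ 2 + frobInner Λb (ℋ - 𝒱) +
        (ρ / 2) * (frobNorm (ℋ - 𝒱)) ^ 2
    let 𝒱star : Fin s → Fin t → ZMod n → ℝ :=
      tProd3 ℬ (tProd3 (tTranspose 𝒰) 𝒴 + Λb + ρ • ℋ)
    (∀ 𝒱, g 𝒱star ≤ g 𝒱) ∧ (∀ 𝒱, g 𝒱 = g 𝒱star → 𝒱 = 𝒱star) := by
  
  intro g 𝒱star
  have hgdef : ∀ 𝒱, g 𝒱 = (1 / 2) * frobInner (𝒴 - tProd3 𝒰 𝒱) (𝒴 - tProd3 𝒰 𝒱) +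
      frobInner Λb (ℋ - 𝒱) + (ρ / 2) * frobInner (ℋ - 𝒱) (ℋ - 𝒱) := by
    intro 𝒱
    show (1 / 2) * (frobNorm (𝒴 - tProd3 𝒰 𝒱)) ^ 2 + frobInner Λb (ℋ - 𝒱) +
        (ρ / 2) * (frobNorm (ℋ - 𝒱)) ^ 2 = _
    rw [frobNorm_sq, frobNorm_sq]
  have hVs : 𝒱star = tProd3 ℬ (tProd3 (tTranspose 𝒰) 𝒴 + Λb + ρ • ℋ) := rfl
  have hM : tProd3 (tProd3 (tTranspose 𝒰) 𝒰 + ρ • tId s n) 𝒱star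
      = tProd3 (tTranspose 𝒰) 𝒴 + Λb + ρ • ℋ := by
    rw [hVs, ← tProd3_assoc, hℬ₁, tProd3_id_left]
  have hM' : tProd3 (tTranspose 𝒰) (tProd3 𝒰 𝒱star) + ρ • 𝒱star
      = tProd3 (tTranspose 𝒰) 𝒴 + Λb + ρ • ℋ := by
    rw [← tProd3_assoc, ← hM, tProd3_add_left, tProd3_smul_left, tProd3_id_left]
  have hzero : tProd3 (tTranspose 𝒰) (𝒴 - tProd3 𝒰 𝒱star) + Λb + ρ • (ℋ - 𝒱star) = 0 := by
    rw [tProd3_sub_right, smul_sub]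
    funext i j k
    have h := congrFun (congrFun (congrFun hM' i) j) k
    simp only [Pi.add_apply, Pi.sub_apply, Pi.smul_apply, smul_eq_mul, Pi.zero_apply] at h ⊢
    linarith
  -- key quadratic expansion
  have key : ∀ 𝒱, g 𝒱 = g 𝒱star
      + (1 / 2) * frobInner (tProd3 𝒰 (𝒱 - 𝒱star)) (tProd3 𝒰 (𝒱 - 𝒱star))
      + (ρ / 2) * frobInner (𝒱 - 𝒱star) (𝒱 - 𝒱star) := by
    intro 𝒱
    rw [hgdef 𝒱, hgdef 𝒱star]
    set D := 𝒱 - 𝒱star with hD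
    set E := 𝒴 - tProd3 𝒰 𝒱star with hE
    set F := ℋ - 𝒱star with hF
    set UD := tProd3 𝒰 D with hUD
    have hD1 : 𝒴 - tProd3 𝒰 𝒱 = E - UD := by
      rw [hE, hUD, hD, tProd3_sub_right]; abel
    have hD2 : ℋ - 𝒱 = F - D := by rw [hF, hD]; abel
    have hcross : frobInner D (tProd3 (tTranspose 𝒰) E + Λb + ρ • F) = 0 := by
      rw [hzero]; simp [frobInner]
    rw [frobInner_add_right, frobInner_add_right, frobInner_smul_right] at hcross
    have h1 : frobInner E UD = frobInner D (tProd3 (tTranspose 𝒰) E) := by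
      rw [frobInner_comm, hUD, frobInner_tProd3_adjoint]
    have h2 : frobInner Λb D = frobInner D Λb := frobInner_comm _ _
    have h3 : frobInner F D = frobInner D F := frobInner_comm _ _
    rw [hD1, hD2]
    have h4 : frobInner E UD = frobInner UD E := frobInner_comm _ _
    simp only [frobInner_sub_left, frobInner_sub_right]
    linear_combination (-(1 : ℝ)) * hcross - h1 - h2 - (ρ / 2) * h3 + (1 / 2 : ℝ) * h4
  constructor
  · intro 𝒱
    rw [key 𝒱]
    have q1 := frobInner_self_nonneg (tProd3 𝒰 (𝒱 - 𝒱star))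
    have q2 := frobInner_self_nonneg (𝒱 - 𝒱star)
    nlinarith
  · intro 𝒱 heq
    rw [key 𝒱] at heq
    have q1 := frobInner_self_nonneg (tProd3 𝒰 (𝒱 - 𝒱star))
    have q2 := frobInner_self_nonneg (𝒱 - 𝒱star)
    have hq2 : frobInner (𝒱 - 𝒱star) (𝒱 - 𝒱star) = 0 := by nlinarith
    have := frobInner_self_eq_zero _ hq2
    have h := sub_eq_zero.mp this
    exact h
end
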